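/- Let B be a locally C*-algebra, E a Hilbert B-module, φ : B → B(H) a representation with ‖φ(b)‖ ≤ q(b) for all b ∈ B for some q ∈ S(B), and let φ_q : B_q → B(H) be the associated representation with φ_q ∘ π_q = φ. Then the map x ⊗ h ↦ σ_q^E(x) ⊗ h extends to a unitary operator U : _EH → _{E_q}H between the Hilbert spaces induced from φ on E and from φ_q on E_q. -/

import Mathlib

noncomputable section
open scoped ComplexOrder RightActions
open ContinuousLinearMap (adjoint)

/-- A (continuous) C*-seminorm on a complex *-algebra: a seminorm which is
submultiplicative and satisfies the C*-identity. -/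
structure CStarSeminormOn (A : Type*) [NonUnitalRing A] [StarRing A] [Module ℂ A] extends
    Seminorm ℂ A where
  mul_le' : ∀ a b : A, toSeminorm (a * b) ≤ toSeminorm a * toSeminorm b
  star_mul_self' : ∀ a : A, toSeminorm (star a * a) = toSeminorm a ^ 2

/-- The data of a (right) Hilbert module over a locally C*-algebra `A`: a right
`A`-module with an `A`-valued inner product which is `A`-linear in the second variable,
hermitian, positive and definite. -/
structure HilbertModuleData (A : Type*) [NonUnitalRing A] [StarRing A] [Module ℂ A]
    [TopologicalSpace A] (E : Type*) [AddCommGroup E] [Module ℂ E] where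
  smul : E → A → E
  inner : E → E → A
  add_smul' : ∀ x y a, smul (x + y) a = smul x a + smul y a
  smul_add' : ∀ x a b, smul x (a + b) = smul x a + smul x b
  smul_mul' : ∀ x a b, smul (smul x a) b = smul x (a * b)
  smul_complex : ∀ (c : ℂ) x a, smul (c • x) a = c • smul x a
  inner_add_right : ∀ x y z, inner x (y + z) = inner x y + inner x z
  inner_smul_right : ∀ x y a, inner x (smul y a) = inner x y * a
  inner_smul_complex : ∀ (c : ℂ) x y, inner x (c • y) = c • inner x y
  star_inner : ∀ x y, star (inner x y) = inner y x
  inner_self_nonneg : ∀ x, inner x x ∈ closure {a : A | ∃ b, a = star b * b}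
  inner_self_eq_zero : ∀ x, inner x x = 0 → x = 0

/-- The older Mathlib `CStarModule`: a *right* Hilbert C⋆-module, with `Aᵐᵒᵖ` acting and the
inner product `A`-linear on the right (`⟪x, y <• a⟫ = ⟪x, y⟫ * a`). -/
class RightCStarModule (A E : Type*) [NonUnitalSemiring A] [StarRing A]
    [Module ℂ A] [AddCommGroup E] [Module ℂ E] [PartialOrder A] [SMul Aᵐᵒᵖ E] [Norm A] [Norm E]
    extends Inner A E where
  inner_add_right {x} {y} {z} : inner x (y + z) = inner x y + inner x z
  inner_self_nonneg {x} : 0 ≤ inner x x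
  inner_self {x} : inner x x = 0 ↔ x = 0
  inner_op_smul_right {a : A} {x y : E} : inner x (y <• a) = inner x y * a
  inner_smul_right_complex {z : ℂ} {x} {y} : inner x (z • y) = z • inner x y
  star_inner x y : star (inner x y) = inner y x
  norm_eq_sqrt_norm_inner_self x : ‖x‖ = Real.sqrt ‖inner x x‖

/-- A C*-algebra bundled with a compatible partial order. -/
structure BundledCStarAlg : Type 1 where
  carrier : Type
  [inst : NonUnitalCStarAlgebra carrier]
  [instOrder : PartialOrder carrier]
  [instSOR : StarOrderedRing carrier]

attribute [instance] BundledCStarAlg.inst BundledCStarAlg.instOrder BundledCStarAlg.instSOR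

/-- A bundled Hilbert C*-module over a bundled C*-algebra. -/
structure BundledCStarModule (C : BundledCStarAlg) : Type 1 where
  carrier : Type
  [instGroup : NormedAddCommGroup carrier]
  [instModC : NormedSpace ℂ carrier]
  [instSMul : SMul C.carrierᵐᵒᵖ carrier]
  [instMod : RightCStarModule C.carrier carrier]
  [instComplete : CompleteSpace carrier]

attribute [instance] BundledCStarModule.instGroup BundledCStarModule.instModC
  BundledCStarModule.instSMul BundledCStarModule.instMod BundledCStarModule.instComplete

/-- `π : A → C` realizes the C*-algebra `C` as the quotient `A_p = A/N_p` of `A` by the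
kernel of the C*-seminorm `p`, with the norm induced by `p`. -/
structure IsQuotientHom {A : Type*} [NonUnitalRing A] [StarRing A] [Module ℂ A]
    (p : A → ℝ) (C : BundledCStarAlg) (π : A → C.carrier) : Prop where
  surj : Function.Surjective π
  map_add : ∀ a b, π (a + b) = π a + π b
  map_mul : ∀ a b, π (a * b) = π a * π b
  map_smul : ∀ (c : ℂ) (a : A), π (c • a) = c • π a
  map_star : ∀ a, π (star a) = star (π a)
  norm_eq : ∀ a, ‖π a‖ = p a

/-- `σ : E → F` realizes the Hilbert C*-module `F` over `C` as the quotient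
`E_p = E/N_p^E` of the Hilbert module `E`, compatibly with the quotient map `π : A → C`. -/
structure IsQuotientModuleMap {A : Type*} [NonUnitalRing A] [StarRing A] [Module ℂ A]
    [TopologicalSpace A] {E : Type*} [AddCommGroup E] [Module ℂ E]
    (M : HilbertModuleData A E) {C : BundledCStarAlg} (π : A → C.carrier)
    (F : BundledCStarModule C) (σ : E → F.carrier) : Prop where
  surj : Function.Surjective σ
  map_add : ∀ x y, σ (x + y) = σ x + σ y
  map_smulC : ∀ (c : ℂ) x, σ (c • x) = c • σ x
  map_smul : ∀ x a, σ (M.smul x a) = σ x <• (π a)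
  map_inner : ∀ x y, (inner C.carrier (σ x) (σ y) : C.carrier) = π (M.inner x y)

/-!
The generators `x ⊗ h` of `_EH` and `σ_q x ⊗ h` of `_{E_q}H` have the same Gram matrix, because
`⟨σ_q x, σ_q y⟩ = π_q ⟨x, y⟩` and `φ_q ∘ π_q = φ`. Both families span dense subspaces (the second
because `σ_q` is onto), and two families in Hilbert spaces with equal Gram matrices and dense spans
correspond under a unitary, the continuous extension of the isometry `∑ cᵢ fᵢ ↦ ∑ cᵢ gᵢ`.
-/

open Finsupp

section GramMatrix

variable {𝕜 ι E F : Type*} [RCLike 𝕜]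
  [NormedAddCommGroup E] [InnerProductSpace 𝕜 E] [NormedAddCommGroup F] [InnerProductSpace 𝕜 F]
  {f : ι → E} {g : ι → F}

theorem inner_linearCombination_eq_of_inner_eq
    (hfg : ∀ i j, inner 𝕜 (f i) (f j) = inner 𝕜 (g i) (g j)) (v w : ι →₀ 𝕜) :
    inner 𝕜 (linearCombination 𝕜 f v) (linearCombination 𝕜 f w) =
      inner 𝕜 (linearCombination 𝕜 g v) (linearCombination 𝕜 g w) := by
  simp only [linearCombination_apply, Finsupp.sum_inner, Finsupp.inner_sum, inner_smul_left,
    inner_smul_right, hfg]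

theorem norm_linearCombination_eq_of_inner_eq
    (hfg : ∀ i j, inner 𝕜 (f i) (f j) = inner 𝕜 (g i) (g j)) (v : ι →₀ 𝕜) :
    ‖linearCombination 𝕜 g v‖ = ‖linearCombination 𝕜 f v‖ := by
  rw [@norm_eq_sqrt_re_inner 𝕜, @norm_eq_sqrt_re_inner 𝕜 E,
    inner_linearCombination_eq_of_inner_eq hfg]

theorem denseRange_linearCombination_iff :
    DenseRange (linearCombination 𝕜 f) ↔ Dense (Submodule.span 𝕜 (Set.range f) : Set E) := by
  rw [DenseRange, ← LinearMap.coe_range, range_linearCombination]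

theorem exists_linearIsometryEquiv_of_inner_eq [CompleteSpace E] [CompleteSpace F]
    (hfg : ∀ i j, inner 𝕜 (f i) (f j) = inner 𝕜 (g i) (g j))
    (hf : Dense (Submodule.span 𝕜 (Set.range f) : Set E))
    (hg : Dense (Submodule.span 𝕜 (Set.range g) : Set F)) :
    ∃ U : E ≃ₗᵢ[𝕜] F, ∀ i, U (f i) = g i := by
  have hP := denseRange_linearCombination_iff.mpr hf
  have hQ := denseRange_linearCombination_iff.mpr hg
  have hPQ := norm_linearCombination_eq_of_inner_eq hfg
  refine ⟨(LinearEquiv.refl 𝕜 (ι →₀ 𝕜)).extendOfIsometry _ _ hP hQ hPQ, fun i => ?_⟩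
  simpa using (LinearEquiv.refl 𝕜 (ι →₀ 𝕜)).extendOfIsometry_eq _ _ hP hQ hPQ (single i 1)

end GramMatrix

theorem stmt_11_general
    {B : Type*} [NonUnitalRing B] [StarRing B] [Module ℂ B] [UniformSpace B]
    {E : Type*} [AddCommGroup E] [Module ℂ E] (ME : HilbertModuleData B E)
    {H : Type*} [NormedAddCommGroup H] [InnerProductSpace ℂ H]
    -- the representation `φ` of `B`, dominated by `q ∈ S(B)`:
    (φ : B → (H →L[ℂ] H))
    -- the quotient data `B_q`, `E_q` and the associated representation `φ_q`:
    (Cq : BundledCStarAlg) (πq : B → Cq.carrier)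
    (Eq' : BundledCStarModule Cq) (σq : E → Eq'.carrier)
    (hσq : IsQuotientModuleMap ME πq Eq' σq)
    (φq : Cq.carrier → (H →L[ℂ] H)) (hφq : ∀ b : B, φq (πq b) = φ b)
    -- the induced Hilbert space `_EH` with `em x h = [x ⊗ h]`:
    {EH : Type*} [NormedAddCommGroup EH] [InnerProductSpace ℂ EH] [CompleteSpace EH]
    (em : E → H → EH)
    (hem_inner : ∀ (x y : E) (h k : H),
      (inner ℂ (em x h) (em y k) : ℂ) = (inner ℂ h (φ (ME.inner x y) k) : ℂ))
    (hem_dense : Dense ((Submodule.span ℂ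
      (Set.range fun s : E × H => em s.1 s.2) : Submodule ℂ EH) : Set EH))
    -- the induced Hilbert space `_{E_q}H` with `emq u h = [u ⊗ h]`:
    {EqH : Type*} [NormedAddCommGroup EqH] [InnerProductSpace ℂ EqH] [CompleteSpace EqH]
    (emq : Eq'.carrier → H → EqH)
    (hemq_inner : ∀ (u w : Eq'.carrier) (h k : H),
      (inner ℂ (emq u h) (emq w k) : ℂ) = (inner ℂ h (φq (inner Cq.carrier u w : Cq.carrier) k) : ℂ))
    (hemq_dense : Dense ((Submodule.span ℂ
      (Set.range fun s : Eq'.carrier × H => emq s.1 s.2) : Submodule ℂ EqH) : Set EqH)) :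
    ∃ U : EH ≃ₗᵢ[ℂ] EqH, ∀ (x : E) (h : H), U (em x h) = emq (σq x) h := by
  have hgram : ∀ s t : E × H, inner ℂ (em s.1 s.2) (em t.1 t.2) =
      inner ℂ (emq (σq s.1) s.2) (emq (σq t.1) t.2) := fun s t => by
    rw [hem_inner, hemq_inner, hσq.map_inner, hφq]
  have hrange : Set.range (fun s : E × H => emq (σq s.1) s.2) =
      Set.range fun s : Eq'.carrier × H => emq s.1 s.2 :=
    (hσq.surj.prodMap Function.surjective_id).range_comp fun s => emq s.1 s.2
  obtain ⟨U, hU⟩ := exists_linearIsometryEquiv_of_inner_eq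
    (f := fun s : E × H => em s.1 s.2) hgram hem_dense (hrange ▸ hemq_dense)
  exact ⟨U, fun x h => hU (x, h)⟩

/-- For a Hilbert module `E` over a locally C*-algebra `B` and a representation `φ`
dominated by `q ∈ S(B)` with associated representation `φ_q` of `B_q`, the map
`x ⊗ h ↦ σ_q(x) ⊗ h` extends to a unitary `_EH ≃ _{E_q}H`. -/
theorem stmt_11
    {B : Type*} [NonUnitalRing B] [StarRing B] [Module ℂ B]
    [UniformSpace B] [IsUniformAddGroup B] [T2Space B] [CompleteSpace B]
    {ιB : Type*} [Nonempty ιB] (SB : ιB → CStarSeminormOn B)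
    (hB : WithSeminorms fun i => (SB i).toSeminorm)
    {E : Type*} [AddCommGroup E] [Module ℂ E] (ME : HilbertModuleData B E)
    {H : Type*} [NormedAddCommGroup H] [InnerProductSpace ℂ H] [CompleteSpace H]
    -- the representation `φ` of `B`, dominated by `q ∈ S(B)`:
    (φ : B → (H →L[ℂ] H))
    (hφ_add : ∀ b b', φ (b + b') = φ b + φ b')
    (hφ_mul : ∀ b b', φ (b * b') = φ b ∘L φ b')
    (hφ_smul : ∀ (c : ℂ) b, φ (c • b) = c • φ b)
    (hφ_star : ∀ b, φ (star b) = adjoint (φ b))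
    (q : CStarSeminormOn B) (hq : Continuous fun b => q.toSeminorm b)
    (hnorm : ∀ b : B, ‖φ b‖ ≤ q.toSeminorm b)
    -- the quotient data `B_q`, `E_q` and the associated representation `φ_q`:
    (Cq : BundledCStarAlg) (πq : B → Cq.carrier)
    (hπq : IsQuotientHom (fun b => q.toSeminorm b) Cq πq)
    (Eq' : BundledCStarModule Cq) (σq : E → Eq'.carrier)
    (hσq : IsQuotientModuleMap ME πq Eq' σq)
    (φq : Cq.carrier → (H →L[ℂ] H)) (hφq : ∀ b : B, φq (πq b) = φ b)
    -- the induced Hilbert space `_EH` with `em x h = [x ⊗ h]`: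
    {EH : Type*} [NormedAddCommGroup EH] [InnerProductSpace ℂ EH] [CompleteSpace EH]
    (em : E → H → EH)
    (hem_addE : ∀ x y h, em (x + y) h = em x h + em y h)
    (hem_addH : ∀ x h k, em x (h + k) = em x h + em x k)
    (hem_smul : ∀ (c : ℂ) x h, em x (c • h) = c • em x h)
    (hem_inner : ∀ (x y : E) (h k : H),
      (inner ℂ (em x h) (em y k) : ℂ) = (inner ℂ h (φ (ME.inner x y) k) : ℂ))
    (hem_dense : Dense ((Submodule.span ℂ
      (Set.range fun s : E × H => em s.1 s.2) : Submodule ℂ EH) : Set EH))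
    -- the induced Hilbert space `_{E_q}H` with `emq u h = [u ⊗ h]`:
    {EqH : Type*} [NormedAddCommGroup EqH] [InnerProductSpace ℂ EqH] [CompleteSpace EqH]
    (emq : Eq'.carrier → H → EqH)
    (hemq_addE : ∀ u w h, emq (u + w) h = emq u h + emq w h)
    (hemq_addH : ∀ u h k, emq u (h + k) = emq u h + emq u k)
    (hemq_smul : ∀ (c : ℂ) u h, emq u (c • h) = c • emq u h)
    (hemq_inner : ∀ (u w : Eq'.carrier) (h k : H),
      (inner ℂ (emq u h) (emq w k) : ℂ) = (inner ℂ h (φq (inner Cq.carrier u w : Cq.carrier) k) : ℂ))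
    (hemq_dense : Dense ((Submodule.span ℂ
      (Set.range fun s : Eq'.carrier × H => emq s.1 s.2) : Submodule ℂ EqH) : Set EqH)) :
    ∃ U : EH ≃ₗᵢ[ℂ] EqH, ∀ (x : E) (h : H), U (em x h) = emq (σq x) h :=
  stmt_11_general ME φ Cq πq Eq' σq hσq φq hφq em hem_inner hem_dense emq hemq_inner hemq_dense
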